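/- Let n_T = 2, S₁ = H_R†H_R, S₂ = H_E†H_E, and assume S₁ − S₂ is positive definite. Let λ₀ = λ_max((I + ρS₂)^{-1/2}(I + ρS₁)(I + ρS₂)^{-1/2}), and for a unit vector u₀ ∈ ℂ² satisfying (I + ρS₁)u₀ = λ₀(I + ρS₂)u₀, define S₀ = S₁(I + ρ u₀u₀†S₁)⁻¹ − S₂(I + ρ u₀u₀†S₂)⁻¹ and g = 2 u₀†S₀u₀ − Tr(S₀). Then: (a) every rank-one maximizer of C_s over Ω equals u₀u₀† for some such unit vector u₀; (b) if g < 0 for every such u₀, then every maximizer of C_s over Ω has rank two; equivalently, (c) if u₀u₀† is a maximizer of C_s over Ω, then g ≥ 0 for that u₀. -/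

import Mathlib

open Matrix
open scoped ComplexOrder

/-!
On a rank-one input `vv†` with `‖v‖ = 1` the secrecy rate is
`log (v†(I + ρS₁)v / v†(I + ρS₂)v)`. Writing `R = (I + ρS₂)^{1/2}` and `w = Rv` turns this
generalized Rayleigh quotient into the ordinary Rayleigh quotient of `R⁻¹(I + ρS₁)R⁻¹`, whose
maximizers are exactly its top eigenvectors; this gives (a). For (c), the segment
`Q + t(I − 2Q)`, `t ∈ [0, 1]`, from `Q = u₀u₀†` to `I − u₀u₀†` stays in `Ω`, and the derivative of
`C_s` along it at `t = 0` is `ρ Tr(S₀(I − 2Q)) = −ρg`, which is `≤ 0` at a maximizer. Part (b)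
follows from (a), (c) and `1 ≤ rank Q ≤ 2`.
-/

/-- The positive semidefinite square root of a positive semidefinite matrix
(removed from Mathlib; restored with its old definition). -/
noncomputable def Matrix.PosSemidef.sqrt {n : Type*} [Fintype n] [DecidableEq n]
    {𝕜 : Type*} [RCLike 𝕜] {A : Matrix n n 𝕜} (hA : A.PosSemidef) : Matrix n n 𝕜 :=
  hA.1.eigenvectorUnitary.1 * diagonal ((↑) ∘ (fun x : ℝ => Real.sqrt x) ∘ hA.1.eigenvalues) *
    (star hA.1.eigenvectorUnitary : Matrix n n 𝕜)

/-- The largest eigenvalue of a (Hermitian) complex matrix, expressed as the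
supremum of its real eigenvalues. -/
noncomputable def lamMax {n : ℕ} (A : Matrix (Fin n) (Fin n) ℂ) : ℝ :=
  sSup {t : ℝ | ∃ v : Fin n → ℂ, v ≠ 0 ∧ A *ᵥ v = (t : ℂ) • v}

/-- The secrecy rate `C_s(Q) = log det(I + ρ H_R Q H_R†) − log det(I + ρ H_E Q H_E†)`
for the 2-transmit-antenna wiretap channel. -/
noncomputable def secrecyRate2 {nR nE : ℕ} (HR : Matrix (Fin nR) (Fin 2) ℂ)
    (HE : Matrix (Fin nE) (Fin 2) ℂ) (ρ : ℝ) (Q : Matrix (Fin 2) (Fin 2) ℂ) : ℝ :=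
  Real.log ((1 + (ρ : ℂ) • (HR * Q * HRᴴ)).det.re)
    - Real.log ((1 + (ρ : ℂ) • (HE * Q * HEᴴ)).det.re)

/-- `Q` is a global maximizer of the secrecy rate over
`Ω = {Q ⪰ 0, Tr Q = 1}`. -/
def IsMaximizer2 {nR nE : ℕ} (HR : Matrix (Fin nR) (Fin 2) ℂ)
    (HE : Matrix (Fin nE) (Fin 2) ℂ) (ρ : ℝ) (Q : Matrix (Fin 2) (Fin 2) ℂ) : Prop :=
  Q.PosSemidef ∧ Q.trace = 1 ∧
    ∀ Q' : Matrix (Fin 2) (Fin 2) ℂ, Q'.PosSemidef → Q'.trace = 1 →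
      secrecyRate2 HR HE ρ Q' ≤ secrecyRate2 HR HE ρ Q

/-- `S₀ = S₁(I + ρ u₀u₀†S₁)⁻¹ − S₂(I + ρ u₀u₀†S₂)⁻¹` with `S₁ = H_R†H_R`,
`S₂ = H_E†H_E`. -/
noncomputable def Smat0 {nR nE : ℕ} (HR : Matrix (Fin nR) (Fin 2) ℂ)
    (HE : Matrix (Fin nE) (Fin 2) ℂ) (ρ : ℝ) (u₀ : Fin 2 → ℂ) :
    Matrix (Fin 2) (Fin 2) ℂ :=
  (HRᴴ * HR) * (1 + (ρ : ℂ) • (vecMulVec u₀ (star u₀) * (HRᴴ * HR)))⁻¹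
    - (HEᴴ * HE) * (1 + (ρ : ℂ) • (vecMulVec u₀ (star u₀) * (HEᴴ * HE)))⁻¹

/-- `g = 2 u₀†S₀u₀ − Tr(S₀)`. -/
noncomputable def gval {nR nE : ℕ} (HR : Matrix (Fin nR) (Fin 2) ℂ)
    (HE : Matrix (Fin nE) (Fin 2) ℂ) (ρ : ℝ) (u₀ : Fin 2 → ℂ) : ℝ :=
  2 * (star u₀ ⬝ᵥ (Smat0 HR HE ρ u₀ *ᵥ u₀)).re - (Smat0 HR HE ρ u₀).trace.re

namespace Matrix

section

variable {n : Type*} [Fintype n] [DecidableEq n]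

theorem PosSemidef.posSemidef_sqrt {A : Matrix n n ℂ} (hA : A.PosSemidef) :
    hA.sqrt.PosSemidef := by
  rw [PosSemidef.sqrt, star_eq_conjTranspose]
  refine PosSemidef.mul_mul_conjTranspose_same ?_ _
  rw [posSemidef_diagonal_iff]
  exact fun i => Complex.zero_le_real.2 (Real.sqrt_nonneg _)

theorem PosSemidef.sqrt_mul_self {A : Matrix n n ℂ} (hA : A.PosSemidef) :
    hA.sqrt * hA.sqrt = A := by
  have hU : star (hA.1.eigenvectorUnitary : Matrix n n ℂ) * hA.1.eigenvectorUnitary = 1 :=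
    (mem_unitaryGroup_iff').1 hA.1.eigenvectorUnitary.2
  have hD : diagonal ((RCLike.ofReal : ℝ → ℂ) ∘ (fun x : ℝ => Real.sqrt x) ∘ hA.1.eigenvalues)
      * diagonal ((RCLike.ofReal : ℝ → ℂ) ∘ (fun x : ℝ => Real.sqrt x) ∘ hA.1.eigenvalues)
      = diagonal (RCLike.ofReal ∘ hA.1.eigenvalues) := by
    rw [diagonal_mul_diagonal]
    congr 1
    funext i
    simp only [Function.comp_apply, ← RCLike.ofReal_mul,
      Real.mul_self_sqrt (hA.eigenvalues_nonneg i)]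
  conv_rhs => rw [hA.1.spectral_theorem, Unitary.conjStarAlgAut_apply]
  simp only [PosSemidef.sqrt, Matrix.mul_assoc]
  rw [← Matrix.mul_assoc (star (hA.1.eigenvectorUnitary : Matrix n n ℂ)), hU, Matrix.one_mul,
    ← Matrix.mul_assoc (diagonal _) (diagonal _), hD]

theorem IsHermitian.eq_sum_smul_vecMulVec {A : Matrix n n ℂ} (hA : A.IsHermitian) :
    A = ∑ i, (hA.eigenvalues i : ℂ) •
      vecMulVec ⇑(hA.eigenvectorBasis i) (star ⇑(hA.eigenvectorBasis i)) := by
  conv_lhs => rw [hA.spectral_theorem, Unitary.conjStarAlgAut_apply]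
  ext j k
  simp [mul_apply, diagonal_apply, sum_apply, vecMulVec_apply, mul_comm, mul_assoc]

theorem IsHermitian.eq_zero_of_rank_eq_zero {A : Matrix n n ℂ} (hA : A.IsHermitian)
    (h : A.rank = 0) : A = 0 := by
  rw [← hA.eigenvalues_eq_zero_iff]
  funext i
  by_contra hi
  rw [hA.rank_eq_card_non_zero_eigs] at h
  exact (Fintype.card_eq_zero_iff.1 h).false ⟨i, hi⟩

theorem PosSemidef.exists_eq_vecMulVec_of_rank_eq_one {Q : Matrix n n ℂ} (hQ : Q.PosSemidef)
    (htr : Q.trace = 1) (hrk : Q.rank = 1) :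
    ∃ u : n → ℂ, star u ⬝ᵥ u = 1 ∧ Q = vecMulVec u (star u) := by
  have hcard : Fintype.card {i // hQ.1.eigenvalues i ≠ 0} = 1 := by
    rw [← hQ.1.rank_eq_card_non_zero_eigs, hrk]
  obtain ⟨⟨i, _⟩, hi⟩ := Fintype.card_eq_one_iff.1 hcard
  have hzero : ∀ j ≠ i, hQ.1.eigenvalues j = 0 := fun j hj => by
    by_contra h
    exact hj (congrArg Subtype.val (hi ⟨j, h⟩))
  have hQi := hQ.1.eq_sum_smul_vecMulVec
  rw [Finset.sum_eq_single i (fun j _ hj => by simp [hzero j hj]) (by simp)] at hQi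
  have hone : (hQ.1.eigenvalues i : ℂ) = 1 := by
    rw [← htr, hQ.1.trace_eq_sum_eigenvalues,
      Finset.sum_eq_single i (fun j _ hj => by simp [hzero j hj]) (by simp)]
    rfl
  refine ⟨_, ?_, by rwa [hone, one_smul] at hQi⟩
  rw [dotProduct_comm, ← EuclideanSpace.inner_eq_star_dotProduct, inner_self_eq_norm_sq_to_K,
    hQ.1.eigenvectorBasis.orthonormal.1 i]
  simp

theorem posSemidef_one_sub_vecMulVec {u : n → ℂ} (hu : star u ⬝ᵥ u = 1) :
    (1 - vecMulVec u (star u)).PosSemidef := by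
  have hPH : (1 - vecMulVec u (star u))ᴴ = 1 - vecMulVec u (star u) := by
    rw [conjTranspose_sub, conjTranspose_one, (posSemidef_vecMulVec_self_star u).1]
  have hPP : (1 - vecMulVec u (star u)) * (1 - vecMulVec u (star u))
      = 1 - vecMulVec u (star u) := by
    rw [Matrix.sub_mul, Matrix.one_mul, Matrix.mul_sub, Matrix.mul_one, vecMulVec_mul_vecMulVec,
      hu, one_smul, sub_self, sub_zero]
  have h := posSemidef_conjTranspose_mul_self (1 - vecMulVec u (star u))
  rwa [hPH, hPP] at h

theorem posSemidef_vecMulVec_add_smul_one_sub_two_smul {u : n → ℂ} (hu : star u ⬝ᵥ u = 1)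
    {t : ℝ} (ht : t ∈ Set.Icc (0 : ℝ) 1) :
    (vecMulVec u (star u) + (t : ℂ) • (1 - (2 : ℂ) • vecMulVec u (star u))).PosSemidef := by
  have hcomb : vecMulVec u (star u) + (t : ℂ) • (1 - (2 : ℂ) • vecMulVec u (star u))
      = ((1 - t : ℝ) : ℂ) • vecMulVec u (star u) + (t : ℂ) • (1 - vecMulVec u (star u)) := by
    push_cast
    module
  rw [hcomb]
  exact ((posSemidef_vecMulVec_self_star u).smul (Complex.zero_le_real.2 (sub_nonneg.2 ht.2))).add
    ((posSemidef_one_sub_vecMulVec hu).smul (Complex.zero_le_real.2 ht.1))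

theorem dotProduct_smul_one_sub_mulVec (c : ℂ) (A : Matrix n n ℂ) (w : n → ℂ) :
    star w ⬝ᵥ ((c • 1 - A) *ᵥ w) = c * (star w ⬝ᵥ w) - star w ⬝ᵥ (A *ᵥ w) := by
  rw [sub_mulVec, dotProduct_sub, smul_mulVec, one_mulVec, dotProduct_smul, smul_eq_mul]

theorem hasDerivAt_det_one_add_smul (N : Matrix n n ℂ) :
    HasDerivAt (fun z : ℂ => (1 + z • N).det) N.trace 0 := by
  have hfun : (fun z : ℂ => (1 + z • N).det)
      = fun z => (det (1 + (Polynomial.X : Polynomial ℂ) • N.map Polynomial.C)).eval z := by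
    funext z
    simp [eval_det, ← smul_eq_mul_diagonal]
  rw [hfun, ← derivative_det_one_add_X_smul]
  exact Polynomial.hasDerivAt _ 0

theorem hasDerivAt_det_add_smul {M : Matrix n n ℂ} (hM : IsUnit M.det) (N : Matrix n n ℂ) :
    HasDerivAt (fun z : ℂ => (M + z • N).det) (M.det * (M⁻¹ * N).trace) 0 := by
  have hfun : (fun z : ℂ => (M + z • N).det) = fun z => M.det * (1 + z • (M⁻¹ * N)).det := by
    funext z
    rw [← det_mul, Matrix.mul_add, Matrix.mul_one, Matrix.mul_smul,
      mul_nonsing_inv_cancel_left _ _ hM]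
  rw [hfun]
  exact (hasDerivAt_det_one_add_smul _).const_mul _

theorem hasDerivAt_log_re_det_add_smul {M : Matrix n n ℂ} (hM : 0 < M.det) (N : Matrix n n ℂ) :
    HasDerivAt (fun t : ℝ => Real.log (M + (t : ℂ) • N).det.re) (M⁻¹ * N).trace.re 0 := by
  obtain ⟨hre, him⟩ := Complex.pos_iff.1 hM
  have h := (hasDerivAt_det_add_smul (isUnit_iff_ne_zero.2 hM.ne') N).real_of_complex (z := 0)
  convert h.log (by simpa using hre.ne') using 1
  rw [Complex.mul_re, ← him]
  simp [hre.ne']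

end

theorem posDef_one_add_smul {n : Type*} [DecidableEq n] {A : Matrix n n ℂ} (hA : A.PosSemidef)
    {ρ : ℝ} (hρ : 0 ≤ ρ) : (1 + (ρ : ℂ) • A).PosDef :=
  PosDef.one.add_posSemidef (hA.smul (Complex.zero_le_real.2 hρ))

theorem exists_ofReal_smul_dotProduct_eq_one {ι : Type*} [Fintype ι] {v : ι → ℂ} (hv : v ≠ 0) :
    ∃ c : ℝ, star ((c : ℂ) • v) ⬝ᵥ ((c : ℂ) • v) = 1 := by
  obtain ⟨hre, him⟩ := Complex.pos_iff.1 (dotProduct_star_self_pos_iff.2 hv)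
  have hz : star v ⬝ᵥ v = ((star v ⬝ᵥ v).re : ℂ) := Complex.ext rfl him.symm
  refine ⟨(√(star v ⬝ᵥ v).re)⁻¹, ?_⟩
  have hc : (√(star v ⬝ᵥ v).re)⁻¹ * (√(star v ⬝ᵥ v).re)⁻¹ * (star v ⬝ᵥ v).re = 1 := by
    rw [← mul_inv, Real.mul_self_sqrt hre.le, inv_mul_cancel₀ hre.ne']
  rw [star_smul, smul_dotProduct, dotProduct_smul, smul_smul, smul_eq_mul, hz, Complex.star_def,
    Complex.conj_ofReal]
  exact_mod_cast hc

theorem trace_vecMulVec_add_smul_one_sub_two_smul {u : Fin 2 → ℂ} (hu : star u ⬝ᵥ u = 1)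
    (t : ℂ) : (vecMulVec u (star u) + t • (1 - (2 : ℂ) • vecMulVec u (star u))).trace = 1 := by
  rw [trace_add, trace_smul, trace_sub, trace_smul, trace_one, trace_vecMulVec, dotProduct_comm, hu]
  norm_num

theorem det_one_add_smul_mul_mul_conjTranspose {m k : Type*} [Fintype m] [DecidableEq m]
    [Fintype k] [DecidableEq k] (H : Matrix m k ℂ) (c : ℂ) (X : Matrix k k ℂ) :
    (1 + c • (H * X * Hᴴ)).det = (1 + c • (X * (Hᴴ * H))).det := by
  rw [Matrix.mul_assoc, ← Matrix.mul_smul, det_one_add_mul_comm, Matrix.smul_mul,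
    Matrix.mul_assoc]

theorem det_one_add_smul_mul_vecMulVec_mul_conjTranspose {m k : Type*} [Fintype m]
    [DecidableEq m] [Fintype k] [DecidableEq k] (H : Matrix m k ℂ) (c : ℂ) {v : k → ℂ}
    (hv : star v ⬝ᵥ v = 1) :
    (1 + c • (H * vecMulVec v (star v) * Hᴴ)).det = star v ⬝ᵥ ((1 + c • (Hᴴ * H)) *ᵥ v) := by
  rw [det_one_add_smul_mul_mul_conjTranspose, vecMulVec_mul, ← smul_vecMulVec, vecMulVec_eq Unit,
    det_one_add_replicateCol_mul_replicateRow, add_mulVec, one_mulVec, dotProduct_add, hv,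
    dotProduct_smul, smul_mulVec, dotProduct_smul, dotProduct_mulVec]

theorem hasDerivAt_log_re_det_one_add_smul_mul_mul_conjTranspose {m k : Type*} [Fintype m]
    [DecidableEq m] [Fintype k] [DecidableEq k] (H : Matrix m k ℂ) {ρ : ℝ} (hρ : 0 ≤ ρ)
    {Q : Matrix k k ℂ} (hQ : Q.PosSemidef) (D : Matrix k k ℂ) :
    HasDerivAt (fun t : ℝ => Real.log (1 + (ρ : ℂ) • (H * (Q + (t : ℂ) • D) * Hᴴ)).det.re)
      (ρ * ((Hᴴ * H) * (1 + (ρ : ℂ) • (Q * (Hᴴ * H)))⁻¹ * D).trace.re) 0 := by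
  set M := 1 + (ρ : ℂ) • (Q * (Hᴴ * H))
  have hM : 0 < M.det := by
    rw [← det_one_add_smul_mul_mul_conjTranspose]
    exact (posDef_one_add_smul (hQ.mul_mul_conjTranspose_same H) hρ).det_pos
  have hfun : (fun t : ℝ => Real.log (1 + (ρ : ℂ) • (H * (Q + (t : ℂ) • D) * Hᴴ)).det.re)
      = fun t : ℝ => Real.log (M + (t : ℂ) • ((ρ : ℂ) • (D * (Hᴴ * H)))).det.re := by
    funext t
    rw [det_one_add_smul_mul_mul_conjTranspose, Matrix.add_mul, smul_add, ← add_assoc,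
      Matrix.smul_mul, smul_comm]
  rw [hfun, ← Complex.re_ofReal_mul]
  convert hasDerivAt_log_re_det_add_smul hM _ using 3
  rw [Matrix.mul_smul, trace_smul, smul_eq_mul, trace_mul_cycle', Matrix.mul_assoc]

end Matrix

namespace Matrix.IsHermitian

variable {n : ℕ} {A : Matrix (Fin n) (Fin n) ℂ}

theorem setOf_eigenvector_eq_spectrum (hA : A.IsHermitian) :
    {t : ℝ | ∃ v : Fin n → ℂ, v ≠ 0 ∧ A *ᵥ v = (t : ℂ) • v} = spectrum ℝ A := by
  ext t
  constructor
  · rintro ⟨v, hv, hAv⟩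
    rw [spectrum.mem_iff, isUnit_iff_isUnit_det, isUnit_iff_ne_zero, not_not,
      ← exists_mulVec_eq_zero_iff]
    refine ⟨v, hv, ?_⟩
    rw [Algebra.algebraMap_eq_smul_one, sub_mulVec, hAv, smul_mulVec, one_mulVec,
      Complex.coe_smul, sub_self]
  · rw [hA.spectrum_real_eq_range_eigenvalues]
    rintro ⟨i, rfl⟩
    exact ⟨_, (WithLp.ofLp_eq_zero 2).ne.2 (hA.eigenvectorBasis.orthonormal.ne_zero i),
      hA.mulVec_eigenvectorBasis i⟩

theorem lamMax_eq_sSup_spectrum (hA : A.IsHermitian) : lamMax A = sSup (spectrum ℝ A) := by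
  rw [lamMax, hA.setOf_eigenvector_eq_spectrum]

theorem le_lamMax {t : ℝ} (hA : A.IsHermitian) (ht : t ∈ spectrum ℝ A) : t ≤ lamMax A := by
  rw [hA.lamMax_eq_sSup_spectrum]
  refine le_csSup ?_ ht
  rw [hA.spectrum_real_eq_range_eigenvalues]
  exact (Set.finite_range _).bddAbove

theorem exists_mulVec_eq_lamMax_smul [NeZero n] (hA : A.IsHermitian) :
    ∃ v : Fin n → ℂ, v ≠ 0 ∧ A *ᵥ v = (lamMax A : ℂ) • v := by
  have hmem : lamMax A ∈ spectrum ℝ A := by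
    rw [hA.lamMax_eq_sSup_spectrum, hA.spectrum_real_eq_range_eigenvalues]
    exact (Set.range_nonempty _).csSup_mem (Set.finite_range _)
  rwa [← hA.setOf_eigenvector_eq_spectrum] at hmem

theorem posSemidef_lamMax_smul_one_sub (hA : A.IsHermitian) :
    ((lamMax A : ℂ) • 1 - A).PosSemidef := by
  have hM : (lamMax A : ℂ) • 1 - A = algebraMap ℝ _ (lamMax A) - A := by
    rw [Algebra.algebraMap_eq_smul_one, Complex.coe_smul]
  have hH : (algebraMap ℝ (Matrix (Fin n) (Fin n) ℂ) (lamMax A) - A).IsHermitian := by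
    rw [Algebra.algebraMap_eq_smul_one]
    exact (isHermitian_one.smul (IsSelfAdjoint.all (lamMax A))).sub hA
  rw [hM, hH.posSemidef_iff_eigenvalues_nonneg]
  intro i
  obtain ⟨_, rfl, s, hs, hi⟩ := spectrum.singleton_sub_eq A (lamMax A) ▸
    hH.eigenvalues_mem_spectrum_real i
  rw [← hi]
  exact sub_nonneg.2 (hA.le_lamMax hs)

theorem re_dotProduct_mulVec_le_lamMax (hA : A.IsHermitian) (w : Fin n → ℂ) :
    (star w ⬝ᵥ (A *ᵥ w)).re ≤ lamMax A * (star w ⬝ᵥ w).re := by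
  have h := (Complex.nonneg_iff.1 (hA.posSemidef_lamMax_smul_one_sub.dotProduct_mulVec_nonneg w)).1
  rw [dotProduct_smul_one_sub_mulVec, Complex.sub_re, Complex.re_ofReal_mul] at h
  linarith

theorem mulVec_eq_lamMax_smul_of_re_dotProduct_eq (hA : A.IsHermitian) {w : Fin n → ℂ}
    (h : (star w ⬝ᵥ (A *ᵥ w)).re = lamMax A * (star w ⬝ᵥ w).re) :
    A *ᵥ w = (lamMax A : ℂ) • w := by
  have hM := hA.posSemidef_lamMax_smul_one_sub
  have hnonneg := Complex.nonneg_iff.1 (hM.dotProduct_mulVec_nonneg w)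
  have hzero : star w ⬝ᵥ (((lamMax A : ℂ) • 1 - A) *ᵥ w) = 0 := by
    refine Complex.ext ?_ hnonneg.2.symm
    rw [dotProduct_smul_one_sub_mulVec, Complex.sub_re, Complex.re_ofReal_mul, h]
    simp
  rw [hM.dotProduct_mulVec_zero_iff, sub_mulVec, smul_mulVec, one_mulVec, sub_eq_zero] at hzero
  exact hzero.symm

end Matrix.IsHermitian

theorem Matrix.IsHermitian.star_mulVec_dotProduct {n : Type*} [Fintype n] {R : Matrix n n ℂ}
    (hR : R.IsHermitian) (x y : n → ℂ) : star (R *ᵥ x) ⬝ᵥ y = star x ⬝ᵥ (R *ᵥ y) := by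
  rw [star_mulVec, ← dotProduct_mulVec, hR.eq]

theorem Matrix.mulVec_eq_lamMax_smul_of_isMaxOn {n : ℕ} {B C R : Matrix (Fin n) (Fin n) ℂ}
    (hC : C.IsHermitian) (hR : R.IsHermitian) (hRR : R * R = B) (hRu : IsUnit R) {u : Fin n → ℂ}
    (hmax : IsMaxOn (fun v => (star v ⬝ᵥ (C *ᵥ v)).re / (star v ⬝ᵥ (B *ᵥ v)).re)
      {v | star v ⬝ᵥ v = 1} u) :
    C *ᵥ u = (lamMax (R⁻¹ * C * R⁻¹) : ℂ) • (B *ᵥ u) := by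
  rcases eq_or_ne u 0 with rfl | hu
  · simp
  have : NeZero n := ⟨fun h => hu (by subst h; exact Subsingleton.elim _ _)⟩
  set A := R⁻¹ * C * R⁻¹ with hAdef
  have hRdet : IsUnit R.det := (isUnit_iff_isUnit_det R).1 hRu
  have hA : A.IsHermitian := by
    simpa [conjTranspose_nonsing_inv, hR.eq] using isHermitian_conjTranspose_mul_mul R⁻¹ hC
  have hRAR : R * A * R = C := by
    simp only [hAdef, ← Matrix.mul_assoc, mul_nonsing_inv R hRdet, Matrix.one_mul]
    rw [Matrix.mul_assoc, nonsing_inv_mul R hRdet, Matrix.mul_one]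
  have hformC (x : Fin n → ℂ) : star (R *ᵥ x) ⬝ᵥ (A *ᵥ (R *ᵥ x)) = star x ⬝ᵥ (C *ᵥ x) := by
    rw [hR.star_mulVec_dotProduct, mulVec_mulVec, mulVec_mulVec, hRAR]
  have hformB (x : Fin n → ℂ) : star (R *ᵥ x) ⬝ᵥ (R *ᵥ x) = star x ⬝ᵥ (B *ᵥ x) := by
    rw [hR.star_mulVec_dotProduct, mulVec_mulVec, hRR]
  have hB : B.PosDef := by
    simpa [← hRR, hR.eq] using PosDef.conjTranspose_mul_self R (mulVec_injective_iff_isUnit.2 hRu)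
  -- The quotient at `x` is the Rayleigh quotient of `A` at `R x`: it reaches `lamMax A` at a
  -- top eigenvector and never exceeds it, and equality at `R u` makes `R u` a top eigenvector.
  have hlow : lamMax A * (star u ⬝ᵥ (B *ᵥ u)).re ≤ (star u ⬝ᵥ (C *ᵥ u)).re := by
    obtain ⟨w, hw, hAw⟩ := hA.exists_mulVec_eq_lamMax_smul
    obtain ⟨c, hc⟩ := exists_ofReal_smul_dotProduct_eq_one (v := R⁻¹ *ᵥ w) fun h => hw <| by
      simpa [mulVec_mulVec, mul_nonsing_inv R hRdet] using congrArg (R *ᵥ ·) h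
    set v := (c : ℂ) • (R⁻¹ *ᵥ w)
    have hRv : A *ᵥ (R *ᵥ v) = (lamMax A : ℂ) • (R *ᵥ v) := by
      rw [mulVec_smul, mulVec_mulVec, mul_nonsing_inv R hRdet, one_mulVec, mulVec_smul, hAw,
        smul_comm]
    have hBv : 0 < (star v ⬝ᵥ (B *ᵥ v)).re := hB.re_dotProduct_pos fun h => by simp [h] at hc
    have hratio : (star v ⬝ᵥ (C *ᵥ v)).re / (star v ⬝ᵥ (B *ᵥ v)).re = lamMax A := by
      rw [← hformC, ← hformB, hRv, dotProduct_smul, smul_eq_mul, Complex.re_ofReal_mul, hformB,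
        mul_div_cancel_right₀ _ hBv.ne']
    have hBu : 0 < (star u ⬝ᵥ (B *ᵥ u)).re := hB.re_dotProduct_pos hu
    rw [← le_div_iff₀ hBu, ← hratio]
    exact hmax hc
  have hup := hA.re_dotProduct_mulVec_le_lamMax (R *ᵥ u)
  rw [hformC, hformB] at hup
  have heig := hA.mulVec_eq_lamMax_smul_of_re_dotProduct_eq (w := R *ᵥ u)
    (by rw [hformC, hformB]; linarith)
  rw [← hRAR, ← mulVec_mulVec, ← mulVec_mulVec, heig, mulVec_smul, mulVec_mulVec, hRR]

theorem HasDerivAt.nonpos_of_forall_Ioc_le {f : ℝ → ℝ} {f' a b : ℝ} (hf : HasDerivAt f f' a)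
    (hab : a < b) (hmax : ∀ t ∈ Set.Ioc a b, f t ≤ f a) : f' ≤ 0 := by
  have hloc : IsLocalMaxOn f (Set.Icc a b) a := IsMaxOn.localize fun t ht =>
    (eq_or_lt_of_le ht.1).elim (fun h => h ▸ le_refl (f a)) fun h => hmax t ⟨h, ht.2⟩
  have hcone : b - a ∈ posTangentConeAt (Set.Icc a b) a :=
    sub_mem_posTangentConeAt_of_segment_subset (segment_eq_Icc hab.le).subset
  have h := hloc.hasFDerivWithinAt_nonpos hf.hasFDerivAt.hasFDerivWithinAt hcone
  rw [ContinuousLinearMap.toSpanSingleton_apply, smul_eq_mul] at h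
  exact nonpos_of_mul_nonpos_right h (sub_pos.2 hab)

section SecrecyRate

variable {nR nE : ℕ} (HR : Matrix (Fin nR) (Fin 2) ℂ) (HE : Matrix (Fin nE) (Fin 2) ℂ) {ρ : ℝ}

theorem secrecyRate2_vecMulVec {v : Fin 2 → ℂ} (hv : star v ⬝ᵥ v = 1) :
    secrecyRate2 HR HE ρ (vecMulVec v (star v))
      = Real.log (star v ⬝ᵥ ((1 + (ρ : ℂ) • (HRᴴ * HR)) *ᵥ v)).re
        - Real.log (star v ⬝ᵥ ((1 + (ρ : ℂ) • (HEᴴ * HE)) *ᵥ v)).re := by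
  rw [secrecyRate2, det_one_add_smul_mul_vecMulVec_mul_conjTranspose _ _ hv,
    det_one_add_smul_mul_vecMulVec_mul_conjTranspose _ _ hv]

theorem hasDerivAt_secrecyRate2_vecMulVec (hρ : 0 ≤ ρ) (u : Fin 2 → ℂ)
    (D : Matrix (Fin 2) (Fin 2) ℂ) :
    HasDerivAt (fun t : ℝ => secrecyRate2 HR HE ρ (vecMulVec u (star u) + (t : ℂ) • D))
      (ρ * (Smat0 HR HE ρ u * D).trace.re) 0 := by
  have hQ := posSemidef_vecMulVec_self_star u
  refine ((hasDerivAt_log_re_det_one_add_smul_mul_mul_conjTranspose HR hρ hQ D).sub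
    (hasDerivAt_log_re_det_one_add_smul_mul_mul_conjTranspose HE hρ hQ D)).congr_deriv ?_
  rw [Smat0, Matrix.sub_mul, trace_sub, Complex.sub_re, mul_sub]

theorem re_trace_Smat0_mul_one_sub_two_smul_vecMulVec (u : Fin 2 → ℂ) :
    (Smat0 HR HE ρ u * (1 - (2 : ℂ) • vecMulVec u (star u))).trace.re = -gval HR HE ρ u := by
  rw [Matrix.mul_sub, Matrix.mul_one, Matrix.mul_smul, mul_vecMulVec, trace_sub, trace_smul,
    trace_vecMulVec, dotProduct_comm, gval, Complex.sub_re, smul_eq_mul, Complex.mul_re,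
    Complex.re_ofNat, Complex.im_ofNat, zero_mul, sub_zero]
  ring

variable {HR HE}

theorem IsMaximizer2.mulVec_eq_lamMax_smul (hρ : 0 ≤ ρ)
    (hB : ((1 : Matrix (Fin 2) (Fin 2) ℂ) + (ρ : ℂ) • (HEᴴ * HE)).PosSemidef)
    {u : Fin 2 → ℂ} (hu : star u ⬝ᵥ u = 1) (hmax : IsMaximizer2 HR HE ρ (vecMulVec u (star u))) :
    ((1 : Matrix (Fin 2) (Fin 2) ℂ) + (ρ : ℂ) • (HRᴴ * HR)) *ᵥ u
      = (lamMax (hB.sqrt⁻¹ * ((1 : Matrix (Fin 2) (Fin 2) ℂ) + (ρ : ℂ) • (HRᴴ * HR)) * hB.sqrt⁻¹)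
          : ℂ) • (((1 : Matrix (Fin 2) (Fin 2) ℂ) + (ρ : ℂ) • (HEᴴ * HE)) *ᵥ u) := by
  have hC := posDef_one_add_smul (posSemidef_conjTranspose_mul_self HR) hρ
  have hB' := posDef_one_add_smul (posSemidef_conjTranspose_mul_self HE) hρ
  have hsqrt : IsUnit hB.sqrt := by
    rw [isUnit_iff_isUnit_det]
    refine isUnit_of_mul_isUnit_left (y := hB.sqrt.det) ?_
    rw [← det_mul, hB.sqrt_mul_self]
    exact hB'.isUnit.map detMonoidHom
  refine mulVec_eq_lamMax_smul_of_isMaxOn hC.isHermitian hB.posSemidef_sqrt.isHermitian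
    hB.sqrt_mul_self hsqrt fun v (hv : star v ⬝ᵥ v = 1) => ?_
  have hle := hmax.2.2 _ (posSemidef_vecMulVec_self_star v)
    (by rw [trace_vecMulVec, dotProduct_comm, hv])
  have hpos {M : Matrix (Fin 2) (Fin 2) ℂ} (hM : M.PosDef) {w : Fin 2 → ℂ}
      (hw : star w ⬝ᵥ w = 1) : 0 < (star w ⬝ᵥ (M *ᵥ w)).re :=
    hM.re_dotProduct_pos (by rintro rfl; simp at hw)
  rw [secrecyRate2_vecMulVec HR HE hv, secrecyRate2_vecMulVec HR HE hu,
    ← Real.log_div (hpos hC hv).ne' (hpos hB' hv).ne',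
    ← Real.log_div (hpos hC hu).ne' (hpos hB' hu).ne'] at hle
  exact (Real.log_le_log_iff (div_pos (hpos hC hv) (hpos hB' hv))
    (div_pos (hpos hC hu) (hpos hB' hu))).1 hle

theorem IsMaximizer2.exists_eq_vecMulVec_of_rank_eq_one (hρ : 0 ≤ ρ)
    (hB : ((1 : Matrix (Fin 2) (Fin 2) ℂ) + (ρ : ℂ) • (HEᴴ * HE)).PosSemidef)
    {Q : Matrix (Fin 2) (Fin 2) ℂ} (hmax : IsMaximizer2 HR HE ρ Q) (hrk : Q.rank = 1) :
    ∃ u : Fin 2 → ℂ, star u ⬝ᵥ u = 1 ∧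
      ((1 : Matrix (Fin 2) (Fin 2) ℂ) + (ρ : ℂ) • (HRᴴ * HR)) *ᵥ u
        = (lamMax (hB.sqrt⁻¹ * ((1 : Matrix (Fin 2) (Fin 2) ℂ) + (ρ : ℂ) • (HRᴴ * HR)) *
            hB.sqrt⁻¹) : ℂ) • (((1 : Matrix (Fin 2) (Fin 2) ℂ) + (ρ : ℂ) • (HEᴴ * HE)) *ᵥ u) ∧
      Q = vecMulVec u (star u) := by
  obtain ⟨u, hu, rfl⟩ := hmax.1.exists_eq_vecMulVec_of_rank_eq_one hmax.2.1 hrk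
  exact ⟨u, hu, hmax.mulVec_eq_lamMax_smul hρ hB hu, rfl⟩

theorem IsMaximizer2.gval_nonneg (hρ : 0 < ρ) {u : Fin 2 → ℂ} (hu : star u ⬝ᵥ u = 1)
    (hmax : IsMaximizer2 HR HE ρ (vecMulVec u (star u))) : 0 ≤ gval HR HE ρ u := by
  have hderiv := hasDerivAt_secrecyRate2_vecMulVec HR HE hρ.le u
    (1 - (2 : ℂ) • vecMulVec u (star u))
  rw [re_trace_Smat0_mul_one_sub_two_smul_vecMulVec] at hderiv
  have hnonpos := hderiv.nonpos_of_forall_Ioc_le one_pos fun t ht => by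
    simpa using hmax.2.2 _
      (posSemidef_vecMulVec_add_smul_one_sub_two_smul hu (Set.Ioc_subset_Icc_self ht))
      (trace_vecMulVec_add_smul_one_sub_two_smul hu t)
  exact neg_nonpos.1 (nonpos_of_mul_nonpos_right hnonpos hρ)

end SecrecyRate

theorem stmt_15_general (nR nE : ℕ) (HR : Matrix (Fin nR) (Fin 2) ℂ)
    (HE : Matrix (Fin nE) (Fin 2) ℂ) (ρ : ℝ) (hρ : 0 < ρ)
    (hB : ((1 : Matrix (Fin 2) (Fin 2) ℂ) + (ρ : ℂ) • (HEᴴ * HE)).PosSemidef)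
    (lam0 : ℝ)
    (hlam0 : lam0 = lamMax (hB.sqrt⁻¹ *
        ((1 : Matrix (Fin 2) (Fin 2) ℂ) + (ρ : ℂ) • (HRᴴ * HR)) * hB.sqrt⁻¹)) :
    (∀ Q : Matrix (Fin 2) (Fin 2) ℂ, IsMaximizer2 HR HE ρ Q → Q.rank = 1 →
      ∃ u₀ : Fin 2 → ℂ, star u₀ ⬝ᵥ u₀ = 1 ∧
        ((1 : Matrix (Fin 2) (Fin 2) ℂ) + (ρ : ℂ) • (HRᴴ * HR)) *ᵥ u₀
          = (lam0 : ℂ) • (((1 : Matrix (Fin 2) (Fin 2) ℂ) + (ρ : ℂ) • (HEᴴ * HE)) *ᵥ u₀) ∧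
        Q = vecMulVec u₀ (star u₀)) ∧
    ((∀ u₀ : Fin 2 → ℂ, star u₀ ⬝ᵥ u₀ = 1 →
        ((1 : Matrix (Fin 2) (Fin 2) ℂ) + (ρ : ℂ) • (HRᴴ * HR)) *ᵥ u₀
          = (lam0 : ℂ) • (((1 : Matrix (Fin 2) (Fin 2) ℂ) + (ρ : ℂ) • (HEᴴ * HE)) *ᵥ u₀) →
        gval HR HE ρ u₀ < 0) →
      ∀ Q : Matrix (Fin 2) (Fin 2) ℂ, IsMaximizer2 HR HE ρ Q → Q.rank = 2) ∧
    (∀ u₀ : Fin 2 → ℂ, star u₀ ⬝ᵥ u₀ = 1 →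
      ((1 : Matrix (Fin 2) (Fin 2) ℂ) + (ρ : ℂ) • (HRᴴ * HR)) *ᵥ u₀
        = (lam0 : ℂ) • (((1 : Matrix (Fin 2) (Fin 2) ℂ) + (ρ : ℂ) • (HEᴴ * HE)) *ᵥ u₀) →
      IsMaximizer2 HR HE ρ (vecMulVec u₀ (star u₀)) →
      0 ≤ gval HR HE ρ u₀) := by
  subst hlam0
  refine ⟨fun Q hmax hrk => hmax.exists_eq_vecMulVec_of_rank_eq_one hρ.le hB hrk,
    fun hg Q hmax => ?_, fun u hu _ hmax => hmax.gval_nonneg hρ hu⟩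
  have hle : Q.rank ≤ 2 := by simpa using Q.rank_le_card_width
  have hne0 : Q.rank ≠ 0 := fun h => by
    simpa [hmax.1.1.eq_zero_of_rank_eq_zero h] using hmax.2.1
  have hne1 : Q.rank ≠ 1 := fun h => by
    obtain ⟨u, hu, hadm, rfl⟩ := hmax.exists_eq_vecMulVec_of_rank_eq_one hρ.le hB h
    exact (hg u hu hadm).not_ge (hmax.gval_nonneg hρ hu)
  omega

/-- For `n_T = 2` with `S₁ − S₂ = H_R†H_R − H_E†H_E` positive
definite, let `lam0 = λ_max((I+ρS₂)^{-1/2}(I+ρS₁)(I+ρS₂)^{-1/2})` and call `u₀`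
admissible if it is a unit vector with `(I+ρS₁)u₀ = lam0(I+ρS₂)u₀`. Then:
(a) every rank-one maximizer of `C_s` over `Ω` equals `u₀u₀†` for some
admissible `u₀`; (b) if `g(u₀) < 0` for every admissible `u₀`, then every
maximizer has rank two; (c) if `u₀u₀†` is a maximizer for an admissible `u₀`,
then `g(u₀) ≥ 0`. -/
theorem stmt_15 (nR nE : ℕ) (HR : Matrix (Fin nR) (Fin 2) ℂ)
    (HE : Matrix (Fin nE) (Fin 2) ℂ) (ρ : ℝ) (hρ : 0 < ρ)
    (hpd : (HRᴴ * HR - HEᴴ * HE).PosDef)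
    (hB : ((1 : Matrix (Fin 2) (Fin 2) ℂ) + (ρ : ℂ) • (HEᴴ * HE)).PosSemidef)
    (lam0 : ℝ)
    (hlam0 : lam0 = lamMax (hB.sqrt⁻¹ *
        ((1 : Matrix (Fin 2) (Fin 2) ℂ) + (ρ : ℂ) • (HRᴴ * HR)) * hB.sqrt⁻¹)) :
    (∀ Q : Matrix (Fin 2) (Fin 2) ℂ, IsMaximizer2 HR HE ρ Q → Q.rank = 1 →
      ∃ u₀ : Fin 2 → ℂ, star u₀ ⬝ᵥ u₀ = 1 ∧
        ((1 : Matrix (Fin 2) (Fin 2) ℂ) + (ρ : ℂ) • (HRᴴ * HR)) *ᵥ u₀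
          = (lam0 : ℂ) • (((1 : Matrix (Fin 2) (Fin 2) ℂ) + (ρ : ℂ) • (HEᴴ * HE)) *ᵥ u₀) ∧
        Q = vecMulVec u₀ (star u₀)) ∧
    ((∀ u₀ : Fin 2 → ℂ, star u₀ ⬝ᵥ u₀ = 1 →
        ((1 : Matrix (Fin 2) (Fin 2) ℂ) + (ρ : ℂ) • (HRᴴ * HR)) *ᵥ u₀
          = (lam0 : ℂ) • (((1 : Matrix (Fin 2) (Fin 2) ℂ) + (ρ : ℂ) • (HEᴴ * HE)) *ᵥ u₀) →
        gval HR HE ρ u₀ < 0) →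
      ∀ Q : Matrix (Fin 2) (Fin 2) ℂ, IsMaximizer2 HR HE ρ Q → Q.rank = 2) ∧
    (∀ u₀ : Fin 2 → ℂ, star u₀ ⬝ᵥ u₀ = 1 →
      ((1 : Matrix (Fin 2) (Fin 2) ℂ) + (ρ : ℂ) • (HRᴴ * HR)) *ᵥ u₀
        = (lam0 : ℂ) • (((1 : Matrix (Fin 2) (Fin 2) ℂ) + (ρ : ℂ) • (HEᴴ * HE)) *ᵥ u₀) →
      IsMaximizer2 HR HE ρ (vecMulVec u₀ (star u₀)) →
      0 ≤ gval HR HE ρ u₀) :=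
  stmt_15_general nR nE HR HE ρ hρ hB lam0 hlam0
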